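/- For every ε > 0 and every integer n ≥ 1, the map x ∈ M ↦ σ_{ε,n,x} ∈ 𝓜 is continuous with respect to the weak* topology on 𝓜. -/

import Mathlib

open MeasureTheory Metric Set Filter Topology
open scoped ENNReal NNReal

namespace EmpStoch

variable {M : Type*} [MetricSpace M] [MeasurableSpace M] [BorelSpace M]

/-- The Dirac probability measure `δ_x` at a point `x`. -/
noncomputable def diracProb (x : M) : ProbabilityMeasure M :=
  ⟨MeasureTheory.Measure.dirac x, inferInstance⟩

/-- `dstar` is a metric on the space `𝓜` of Borel probability measures which is
compatible with (i.e. metrizes) the weak* topology. -/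
def MetrizesWeakStar (dstar : ProbabilityMeasure M → ProbabilityMeasure M → ℝ) : Prop :=
  (∀ μ ν, dstar μ ν = 0 ↔ μ = ν) ∧
  (∀ μ ν, dstar μ ν = dstar ν μ) ∧
  (∀ μ ν ξ, dstar μ ξ ≤ dstar μ ν + dstar ν ξ) ∧
  (∀ (μ : ProbabilityMeasure M) (s : Set (ProbabilityMeasure M)),
      s ∈ nhds μ ↔ ∃ ρ > (0 : ℝ), {ν | dstar ν μ < ρ} ⊆ s)

/-- `P ε x` is the transition probability `p_ε(x,·)`, i.e. for every `ε > 0`, every `x`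
and every Borel set `A`, `p_ε(x,A) = m(A ∩ B_ε(f x)) / m(B_ε(f x))`. -/
def IsTransitionKernel (f : M → M) (m : Measure M)
    (P : ℝ → M → ProbabilityMeasure M) : Prop :=
  ∀ ε > (0 : ℝ), ∀ (x : M) (A : Set M), MeasurableSet A →
    (P ε x : Measure M) A = m (A ∩ Metric.ball (f x) ε) / m (Metric.ball (f x) ε)

/-- `Lop ε` is the dual transfer operator `L*_ε : 𝓜 → 𝓜`, characterized by
`∫ φ d(L*_ε μ) = ∫ (∫ φ(y) p_ε(x,dy)) dμ(x)` for every continuous `φ`. -/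
def IsDualTransfer (P : ℝ → M → ProbabilityMeasure M)
    (Lop : ℝ → ProbabilityMeasure M → ProbabilityMeasure M) : Prop :=
  ∀ ε > (0 : ℝ), ∀ (μ : ProbabilityMeasure M) (φ : C(M, ℝ)),
    ∫ y, φ y ∂(Lop ε μ : Measure M) = ∫ x, (∫ y, φ y ∂(P ε x : Measure M)) ∂(μ : Measure M)

/-- `S ε n x` is the empiric stochastic probability
`σ_{ε,n,x} = (1/n) ∑_{j=1}^n (L*_ε)^j δ_x`. -/
def IsEmpiricStochastic (Lop : ℝ → ProbabilityMeasure M → ProbabilityMeasure M)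
    (S : ℝ → ℕ → M → ProbabilityMeasure M) : Prop :=
  ∀ ε > (0 : ℝ), ∀ n : ℕ, 1 ≤ n → ∀ x : M,
    (S ε n x : Measure M) =
      (n : ℝ≥0∞)⁻¹ • ∑ j ∈ Finset.range n, ((Lop ε)^[j + 1] (diracProb x) : Measure M)

/-- `S0 n x` is the zero-noise empiric probability `σ_{n,x} = (1/n) ∑_{j=1}^n δ_{f^j x}`. -/
def IsEmpiricZeroNoise (f : M → M) (S0 : ℕ → M → ProbabilityMeasure M) : Prop :=
  ∀ n : ℕ, 1 ≤ n → ∀ x : M,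
    (S0 n x : Measure M) =
      (n : ℝ≥0∞)⁻¹ • ∑ j ∈ Finset.range n, MeasureTheory.Measure.dirac (f^[j + 1] x)

/-- `pω_x`: the set of all weak* limits of convergent subsequences of `(σ_{n,x})_{n ≥ 1}`. -/
def pOmega (S0 : ℕ → M → ProbabilityMeasure M) (x : M) : Set (ProbabilityMeasure M) :=
  {ν | ∃ φ : ℕ → ℕ, StrictMono φ ∧ (∀ i, 1 ≤ φ i) ∧
    Tendsto (fun i => S0 (φ i) x) atTop (nhds ν)}

/-- The strong basin of statistical attraction `A_μ = {x : pω_x = {μ}}`. -/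
def strongBasin (S0 : ℕ → M → ProbabilityMeasure M) (μ : ProbabilityMeasure M) : Set M :=
  {x | pOmega S0 x = {μ}}

/-- The `ρ`-weak basin of statistical attraction
`A^ρ_μ = {x : dist*(pω_x, μ) < ρ}`. -/
def weakBasin (dstar : ProbabilityMeasure M → ProbabilityMeasure M → ℝ)
    (S0 : ℕ → M → ProbabilityMeasure M) (ρ : ℝ) (μ : ProbabilityMeasure M) : Set M :=
  {x | ∃ ν ∈ pOmega S0 x, dstar ν μ < ρ}

/-- The basin of empiric stochastic stability `Â_μ` of a measure `μ`. -/
def empBasin (dstar : ProbabilityMeasure M → ProbabilityMeasure M → ℝ)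
    (S : ℝ → ℕ → M → ProbabilityMeasure M) (μ : ProbabilityMeasure M) : Set M :=
  {x | ∀ ρ > (0 : ℝ), ∃ N : ℕ, ∀ n ≥ N, ∃ ε₀ > (0 : ℝ), ∀ ε : ℝ, 0 < ε → ε ≤ ε₀ →
    dstar (S ε n x) μ < ρ}

/-- `μ` is `f`-invariant: `f_* μ = μ`. -/
def IsInvariant (f : M → M) (μ : ProbabilityMeasure M) : Prop :=
  (μ : Measure M).map f = (μ : Measure M)

/-- An `f`-invariant measure `μ` is physical if its strong basin of statistical
attraction has positive `m`-measure. -/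
def Physical (f : M → M) (m : Measure M) (S0 : ℕ → M → ProbabilityMeasure M)
    (μ : ProbabilityMeasure M) : Prop :=
  IsInvariant f μ ∧ 0 < m (strongBasin S0 μ)

/-- An `f`-invariant measure `μ` is pseudo-physical if all its `ρ`-weak basins of
statistical attraction have positive `m`-measure. -/
def PseudoPhysical (f : M → M) (m : Measure M)
    (dstar : ProbabilityMeasure M → ProbabilityMeasure M → ℝ)
    (S0 : ℕ → M → ProbabilityMeasure M) (μ : ProbabilityMeasure M) : Prop :=
  IsInvariant f μ ∧ ∀ ρ > (0 : ℝ), 0 < m (weakBasin dstar S0 ρ μ)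

/-- A probability measure `μ` is empirically stochastically stable. -/
def EmpStochStable (m : Measure M)
    (dstar : ProbabilityMeasure M → ProbabilityMeasure M → ℝ)
    (S : ℝ → ℕ → M → ProbabilityMeasure M) (μ : ProbabilityMeasure M) : Prop :=
  ∃ A : Set M, MeasurableSet A ∧ 0 < m A ∧
    ∀ ρ > (0 : ℝ), ∃ N : ℕ, ∀ n ≥ N, ∃ ε₀ > (0 : ℝ), ∀ ε : ℝ, 0 < ε → ε ≤ ε₀ →
      ∀ᵐ x ∂m, x ∈ A → dstar (S ε n x) μ < ρ

/-- `μ` is globally empirically stochastically stable: it is empirically stochastically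
stable and its basin `Â_μ` has full `m`-measure. -/
def GloballyEmpStochStable (m : Measure M)
    (dstar : ProbabilityMeasure M → ProbabilityMeasure M → ℝ)
    (S : ℝ → ℕ → M → ProbabilityMeasure M) (μ : ProbabilityMeasure M) : Prop :=
  EmpStochStable m dstar S μ ∧ m (empBasin dstar S μ)ᶜ = 0

/-- `dist*(σ, K) := inf_{μ ∈ K} dist*(σ, μ)` (a minimum when `K` is compact). -/
noncomputable def dstarSet (dstar : ProbabilityMeasure M → ProbabilityMeasure M → ℝ)
    (σ : ProbabilityMeasure M) (K : Set (ProbabilityMeasure M)) : ℝ :=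
  sInf ((fun μ => dstar σ μ) '' K)

/-- The basin of empiric stochastic stability `Â_K` of a set of measures `K`. -/
noncomputable def empBasinSet (dstar : ProbabilityMeasure M → ProbabilityMeasure M → ℝ)
    (S : ℝ → ℕ → M → ProbabilityMeasure M) (K : Set (ProbabilityMeasure M)) : Set M :=
  {x | ∀ ρ > (0 : ℝ), ∃ N : ℕ, ∀ n ≥ N, ∃ ε₀ > (0 : ℝ), ∀ ε : ℝ, 0 < ε → ε ≤ ε₀ →
    dstarSet dstar (S ε n x) K < ρ}

/-- The strong basin of statistical attraction `A_K = {x : pω_x ⊆ K}` of a set `K`. -/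
def strongBasinSet (S0 : ℕ → M → ProbabilityMeasure M)
    (K : Set (ProbabilityMeasure M)) : Set M :=
  {x | pOmega S0 x ⊆ K}

/-- A nonempty weak*-compact set `K` of `f`-invariant measures is empirically
stochastically stable: (a) uniform approximation on a positive-measure set, and
(b) minimality with respect to the basins. -/
noncomputable def EmpStochStableSet (f : M → M) (m : Measure M)
    (dstar : ProbabilityMeasure M → ProbabilityMeasure M → ℝ)
    (S : ℝ → ℕ → M → ProbabilityMeasure M) (K : Set (ProbabilityMeasure M)) : Prop :=
  K.Nonempty ∧ IsCompact K ∧ (∀ μ ∈ K, IsInvariant f μ) ∧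
  (∃ A : Set M, MeasurableSet A ∧ 0 < m A ∧
    ∀ ρ > (0 : ℝ), ∃ N : ℕ, ∀ n ≥ N, ∃ ε₀ > (0 : ℝ), ∀ ε : ℝ, 0 < ε → ε ≤ ε₀ →
      ∀ x ∈ A, dstarSet dstar (S ε n x) K < ρ) ∧
  (∀ K' : Set (ProbabilityMeasure M), K'.Nonempty → IsCompact K' →
    (∀ μ ∈ K', IsInvariant f μ) →
    m (empBasinSet dstar S K \ empBasinSet dstar S K') = 0 → K ⊆ K')

/-- `K` is globally empirically stochastically stable: it is empirically stochastically
stable and its basin `Â_K` has full `m`-measure. -/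
noncomputable def GloballyEmpStochStableSet (f : M → M) (m : Measure M)
    (dstar : ProbabilityMeasure M → ProbabilityMeasure M → ℝ)
    (S : ℝ → ℕ → M → ProbabilityMeasure M) (K : Set (ProbabilityMeasure M)) : Prop :=
  EmpStochStableSet f m dstar S K ∧ m (empBasinSet dstar S K)ᶜ = 0

open scoped BoundedContinuousFunction

/-!
Integrating against `p_ε(x,·)` averages over the ball `B_ε(f x)`. Because spheres are `m`-null,
the indicator of `B_ε(z)` varies continuously in `z` off a null set, so `z ↦ ∫_{B_ε(z)} φ dm` and
`z ↦ m(B_ε(z))` are continuous by dominated convergence and `x ↦ p_ε(x,·)` is weak*-continuous.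
Then `x ↦ ∫ φ dp_ε(x,·)` is bounded continuous for bounded continuous `φ`, which makes `L*_ε`
weak*-continuous, and `σ_{ε,n,x}` is an average of the continuous maps `x ↦ (L*_ε)^j δ_x`.
-/

section WeakStar

variable {X Y : Type*} [TopologicalSpace X] [TopologicalSpace Y]
  [MeasurableSpace Y] [OpensMeasurableSpace Y]

theorem continuous_probabilityMeasure_iff {ν : X → ProbabilityMeasure Y} :
    Continuous ν ↔ ∀ φ : Y →ᵇ ℝ, Continuous fun x => ∫ y, φ y ∂(ν x : Measure Y) := by
  refine ⟨fun hν φ => (ProbabilityMeasure.continuous_integral_boundedContinuousFunction φ).comp hν,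
    fun h => continuous_iff_continuousAt.mpr fun x => ?_⟩
  exact ProbabilityMeasure.tendsto_iff_forall_integral_tendsto.mpr fun φ => (h φ).continuousAt

theorem continuous_of_toMeasure_eq_smul_sum {ι : Type*} (s : Finset ι) (c : ℝ≥0∞)
    {g : ι → X → ProbabilityMeasure Y} (hg : ∀ j ∈ s, Continuous (g j))
    {ν : X → ProbabilityMeasure Y}
    (hν : ∀ x, (ν x : Measure Y) = c • ∑ j ∈ s, (g j x : Measure Y)) :
    Continuous ν := by
  refine continuous_probabilityMeasure_iff.mpr fun φ => ?_
  have h_integral : ∀ x, ∫ y, φ y ∂(ν x : Measure Y)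
      = c.toReal • ∑ j ∈ s, ∫ y, φ y ∂(g j x : Measure Y) := fun x => by
    rw [hν, integral_smul_measure, integral_finsetSum_measure fun j _ => φ.integrable _]
  simp_rw [h_integral]
  exact (continuous_finsetSum s fun j hj =>
    continuous_probabilityMeasure_iff.mp (hg j hj) φ).fun_const_smul c.toReal

variable [MeasurableSpace X] [OpensMeasurableSpace X]

theorem continuous_of_integral_eq_integral_integral {K : X → ProbabilityMeasure Y}
    (hK : Continuous K) {L : ProbabilityMeasure X → ProbabilityMeasure Y}
    (hL : ∀ (μ : ProbabilityMeasure X) (φ : C(Y, ℝ)),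
      ∫ y, φ y ∂(L μ : Measure Y) = ∫ x, (∫ y, φ y ∂(K x : Measure Y)) ∂(μ : Measure X)) :
    Continuous L := by
  refine continuous_probabilityMeasure_iff.mpr fun φ => ?_
  let G : X →ᵇ ℝ := .ofNormedAddCommGroup (fun x => ∫ y, φ y ∂(K x : Measure Y))
    (continuous_probabilityMeasure_iff.mp hK φ) ‖φ‖ fun x => φ.norm_integral_le_norm _
  have h_integral : ∀ μ, ∫ y, φ y ∂(L μ : Measure Y) = ∫ x, G x ∂(μ : Measure X) :=
    fun μ => hL μ φ.toContinuousMap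
  simp_rw [h_integral]
  exact ProbabilityMeasure.continuous_integral_boundedContinuousFunction G

end WeakStar

section BallAverage

variable {X : Type*} [PseudoMetricSpace X]

theorem eventually_mem_ball_iff {y z₀ : X} {ε : ℝ} (h : dist y z₀ ≠ ε) :
    ∀ᶠ z in 𝓝 z₀, (y ∈ ball z ε ↔ y ∈ ball z₀ ε) := by
  have hdist : Tendsto (fun z => dist y z) (𝓝 z₀) (𝓝 (dist y z₀)) :=
    tendsto_const_nhds.dist tendsto_id
  rcases h.lt_or_gt with h | h
  · filter_upwards [hdist.eventually_lt_const h] with z hz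
    simp only [mem_ball, hz, h]
  · filter_upwards [hdist.eventually_const_lt h] with z hz
    simp only [mem_ball, hz.not_gt, h.not_gt]

variable [MeasurableSpace X] [OpensMeasurableSpace X]
  {E : Type*} [NormedAddCommGroup E] [NormedSpace ℝ E]

theorem continuous_setIntegral_ball {m : Measure X} {ε : ℝ} (hsph : ∀ z, m (sphere z ε) = 0)
    {ψ : X → E} (hψ : Integrable ψ m) :
    Continuous fun z => ∫ y in ball z ε, ψ y ∂m := by
  simp_rw [← integral_indicator measurableSet_ball]
  refine continuous_iff_continuousAt.mpr fun z₀ => continuousAt_of_dominated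
    (.of_forall fun z => hψ.aestronglyMeasurable.indicator measurableSet_ball)
    (.of_forall fun z => .of_forall fun y => norm_indicator_le_norm_self ψ y) hψ.norm ?_
  filter_upwards [measure_eq_zero_iff_ae_notMem.mp (hsph z₀)] with y hy
  refine (continuousAt_const (y := (ball z₀ ε).indicator ψ y)).congr
    ((eventually_mem_ball_iff hy).mono fun z hz => ?_)
  classical exact if_congr hz.symm rfl rfl

theorem continuous_measureReal_ball {m : Measure X} [IsFiniteMeasure m] {ε : ℝ}
    (hsph : ∀ z, m (sphere z ε) = 0) :
    Continuous fun z => m.real (ball z ε) := by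
  simpa using continuous_setIntegral_ball hsph (integrable_const (1 : ℝ))

end BallAverage

section TransitionKernel

variable {X : Type*} [MetricSpace X] [MeasurableSpace X]
  {f : X → X} {m : Measure X} {P : ℝ → X → ProbabilityMeasure X}

theorem IsTransitionKernel.toMeasure_eq (hP : IsTransitionKernel f m P) {ε : ℝ} (hε : 0 < ε)
    (x : X) :
    (P ε x : Measure X) = (m (ball (f x) ε))⁻¹ • m.restrict (ball (f x) ε) := by
  ext A hA
  rw [hP ε hε x A hA, Measure.smul_apply, Measure.restrict_apply hA, smul_eq_mul,
    ENNReal.div_eq_inv_mul]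

theorem IsTransitionKernel.integral_eq (hP : IsTransitionKernel f m P) {ε : ℝ} (hε : 0 < ε)
    (x : X) (φ : X → ℝ) :
    ∫ y, φ y ∂(P ε x : Measure X) = (m.real (ball (f x) ε))⁻¹ * ∫ y in ball (f x) ε, φ y ∂m := by
  rw [hP.toMeasure_eq hε, integral_smul_measure, ENNReal.toReal_inv, smul_eq_mul, Measure.real]

theorem IsTransitionKernel.continuous [OpensMeasurableSpace X] [IsFiniteMeasure m]
    (hP : IsTransitionKernel f m P) (hf : Continuous f) {ε : ℝ} (hε : 0 < ε)
    (hball : ∀ z, m (ball z ε) ≠ 0) (hsph : ∀ z, m (sphere z ε) = 0) :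
    Continuous (P ε) := by
  refine continuous_probabilityMeasure_iff.mpr fun φ => ?_
  have hball_ne : ∀ x, m.real (ball (f x) ε) ≠ 0 := fun x =>
    (measureReal_ne_zero_iff).mpr (hball (f x))
  simp_rw [hP.integral_eq hε]
  exact (((continuous_measureReal_ball hsph).comp hf).inv₀ hball_ne).mul
    ((continuous_setIntegral_ball hsph (φ.integrable m)).comp hf)

end TransitionKernel

theorem statement_2_general {M : Type*} [MetricSpace M] [MeasurableSpace M]
    [BorelSpace M] (f : M → M) (hf : Continuous f)
    (m : Measure M) [IsFiniteMeasure m]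
    (hball : ∀ (z : M) (r : ℝ), 0 < r → 0 < m (Metric.ball z r))
    (hsph : ∀ (z : M) (r : ℝ), m (Metric.sphere z r) = 0)
    (P : ℝ → M → ProbabilityMeasure M) (hP : IsTransitionKernel f m P)
    (Lop : ℝ → ProbabilityMeasure M → ProbabilityMeasure M) (hL : IsDualTransfer P Lop)
    (S : ℝ → ℕ → M → ProbabilityMeasure M) (hS : IsEmpiricStochastic Lop S) :
    ∀ ε > (0 : ℝ), ∀ n : ℕ, 1 ≤ n → Continuous fun x : M => S ε n x := by
  intro ε hε n hn
  have hLop : Continuous (Lop ε) := continuous_of_integral_eq_integral_integral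
    (hP.continuous hf hε (fun z => (hball z ε hε).ne') fun z => hsph z ε) (hL ε hε)
  exact continuous_of_toMeasure_eq_smul_sum _ _
    (fun j _ => (hLop.iterate (j + 1)).comp continuous_diracProba) (hS ε hε n hn)

theorem statement_2 {M : Type*} [MetricSpace M] [CompactSpace M] [MeasurableSpace M]
    [BorelSpace M] (f : M → M) (hf : Continuous f)
    (m : Measure M) [IsFiniteMeasure m]
    (hball : ∀ (z : M) (r : ℝ), 0 < r → 0 < m (Metric.ball z r))
    (hsph : ∀ (z : M) (r : ℝ), m (Metric.sphere z r) = 0)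
    (P : ℝ → M → ProbabilityMeasure M) (hP : IsTransitionKernel f m P)
    (Lop : ℝ → ProbabilityMeasure M → ProbabilityMeasure M) (hL : IsDualTransfer P Lop)
    (S : ℝ → ℕ → M → ProbabilityMeasure M) (hS : IsEmpiricStochastic Lop S) :
    ∀ ε > (0 : ℝ), ∀ n : ℕ, 1 ≤ n → Continuous fun x : M => S ε n x :=
  statement_2_general f hf m hball hsph P hP Lop hL S hS

end EmpStoch
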